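/- arXiv:1310.2963 — 2 statements merged into one kernel-verified Lean document; each statement's English description precedes it below -/
import Mathlib

section
/- (Theorem MaxMatching / MNT) Let V be a finite set of n trips and G a simple graph on V, and let M_max be a matching of G of maximum cardinality. Then the minimum, over all feasible trip sets P, of the number of parts of P equals n − |M_max|. -/
/-! A feasible trip set with `k` pairs on `n` trips has `n - k` parts, and its pairs form a
matching; conversely, a matching completed by the unmatched trips as singletons is a feasible trip
set. So minimising the number of parts is maximising the matching. -/

open Finset

/-- A feasible trip set: a partition of the trip set `V` in which every part is either a
singleton or a 2-element set forming an edge of the shareability network `G`. -/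
def IsFeasibleTripSet {V : Type*} [Fintype V] [DecidableEq V] (G : SimpleGraph V)
    (P : Finpartition (univ : Finset V)) : Prop :=
  ∀ p ∈ P.parts, (∃ v : V, p = {v}) ∨ (∃ u v : V, G.Adj u v ∧ p = {u, v})

/-- A matching of `G`, viewed as a collection of 2-element vertex sets: each member is an
edge of `G`, and the members are pairwise disjoint. -/
def IsGraphMatching {V : Type*} [DecidableEq V] (G : SimpleGraph V)
    (M : Finset (Finset V)) : Prop :=
  (∀ e ∈ M, ∃ u v : V, G.Adj u v ∧ e = {u, v}) ∧ (M : Set (Finset V)).Pairwise Disjoint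

namespace Finpartition

section DistribLattice

variable {α : Type*} [DistribLattice α] [OrderBot α] [DecidableEq α] {a b : α}

@[simps]
def disjUnion (P : Finpartition a) (Q : Finpartition b) (hab : Disjoint a b) :
    Finpartition (a ⊔ b) where
  parts := P.parts ∪ Q.parts
  supIndep := by
    rw [supIndep_iff_pairwiseDisjoint, coe_union]
    exact P.supIndep.pairwiseDisjoint.union Q.supIndep.pairwiseDisjoint
      fun p hp q hq _ => hab.mono (P.le hp) (Q.le hq)
  sup_parts := by rw [sup_union, P.sup_parts, Q.sup_parts]
  bot_notMem := by simp [P.bot_notMem, Q.bot_notMem]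

theorem card_parts_disjUnion (P : Finpartition a) (Q : Finpartition b) (hab : Disjoint a b) :
    #(P.disjUnion Q hab).parts = #P.parts + #Q.parts :=
  card_union_of_disjoint <| disjoint_left.2 fun _ hp hq =>
    P.ne_bot hp <| disjoint_self.1 <| hab.mono (P.le hp) (Q.le hq)

end DistribLattice

variable {α : Type*} [DecidableEq α] {s : Finset α}

/-- In a partition into parts of size at most two, every part counts one element and every pair
one more. -/
theorem card_parts_add_card_filter_card_eq_two (P : Finpartition s)
    (hP : ∀ p ∈ P.parts, #p ≤ 2) : #P.parts + #{p ∈ P.parts | #p = 2} = #s := by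
  rw [← P.sum_card_parts, card_eq_sum_ones, card_filter, ← sum_add_distrib]
  refine sum_congr rfl fun p hp => ?_
  have hpos := (P.nonempty_of_mem_parts hp).card_pos
  have hle := hP p hp
  split_ifs <;> omega

end Finpartition

namespace IsGraphMatching

variable {V : Type*} [DecidableEq V] {G : SimpleGraph V} {M : Finset (Finset V)}

theorem pairwiseDisjoint (hM : IsGraphMatching G M) : (M : Set (Finset V)).PairwiseDisjoint id :=
  hM.2

theorem card_eq_two (hM : IsGraphMatching G M) {e : Finset V} (he : e ∈ M) : #e = 2 := by
  obtain ⟨u, v, huv, rfl⟩ := hM.1 e he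
  exact card_pair huv.ne

theorem card_sup (hM : IsGraphMatching G M) : #(M.sup id) = 2 * #M := by
  rw [sup_eq_biUnion, card_biUnion hM.pairwiseDisjoint]
  exact (sum_const_nat fun _ he => hM.card_eq_two he).trans (mul_comm _ _)

variable [Fintype V]

def tripSet (hM : IsGraphMatching G M) : Finpartition (univ : Finset V) :=
  ((Finpartition.ofPairwiseDisjoint M hM.pairwiseDisjoint).disjUnion ⊥ disjoint_sdiff).copy
    (union_sdiff_of_subset (subset_univ _))

theorem isFeasibleTripSet_tripSet (hM : IsGraphMatching G M) : IsFeasibleTripSet G hM.tripSet := by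
  intro p hp
  rcases mem_union.1 hp with hp | hp
  · obtain ⟨u, v, huv, rfl⟩ := hM.1 p (mem_of_mem_erase hp)
    exact Or.inr ⟨u, v, huv, rfl⟩
  · obtain ⟨v, -, rfl⟩ := Finpartition.mem_bot_iff.1 hp
    exact Or.inl ⟨v, rfl⟩

theorem card_parts_tripSet (hM : IsGraphMatching G M) :
    #hM.tripSet.parts = Fintype.card V - #M := by
  have hle : 2 * #M ≤ Fintype.card V := hM.card_sup ▸ card_le_univ _
  have hbot : ⊥ ∉ M := fun h => by simpa using hM.card_eq_two h
  rw [tripSet, Finpartition.copy_parts, Finpartition.card_parts_disjUnion,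
    Finpartition.card_bot, card_sdiff_of_subset (subset_univ _), card_univ, hM.card_sup,
    Finpartition.ofPairwiseDisjoint_parts, erase_eq_of_notMem hbot]
  omega

end IsGraphMatching

namespace IsFeasibleTripSet

variable {V : Type*} [Fintype V] [DecidableEq V] {G : SimpleGraph V}
  {P : Finpartition (univ : Finset V)}

theorem card_le_two (hP : IsFeasibleTripSet G P) {p : Finset V} (hp : p ∈ P.parts) : #p ≤ 2 := by
  rcases hP p hp with ⟨v, rfl⟩ | ⟨u, v, -, rfl⟩
  · simp
  · exact Finset.card_le_two

theorem isGraphMatching_filter_card_eq_two (hP : IsFeasibleTripSet G P) :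
    IsGraphMatching G {p ∈ P.parts | #p = 2} := by
  refine ⟨fun e he => ?_, fun _ hp _ hq => P.disjoint (mem_filter.1 hp).1 (mem_filter.1 hq).1⟩
  obtain ⟨he, htwo⟩ := mem_filter.1 he
  rcases hP e he with ⟨v, rfl⟩ | hpair
  · simp at htwo
  · exact hpair

end IsFeasibleTripSet

/-- Theorem MaxMatching / MNT: if `Mmax` is a maximum matching of the shareability network
`G` on `n` trips, then the minimum number of parts of a feasible trip set is `n - |Mmax|`. -/
theorem min_trips_eq_card_sub_max_matching
    {V : Type*} [Fintype V] [DecidableEq V] (G : SimpleGraph V) (n : ℕ)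
    (hn : Fintype.card V = n)
    (Mmax : Finset (Finset V)) (hMmax : IsGraphMatching G Mmax)
    (hmax : ∀ M : Finset (Finset V), IsGraphMatching G M → M.card ≤ Mmax.card) :
    IsLeast {m : ℕ | ∃ P : Finpartition (univ : Finset V),
        IsFeasibleTripSet G P ∧ P.parts.card = m} (n - Mmax.card) := by
  subst hn
  refine ⟨⟨hMmax.tripSet, hMmax.isFeasibleTripSet_tripSet, hMmax.card_parts_tripSet⟩, ?_⟩
  rintro _ ⟨P, hP, rfl⟩
  have hcount := P.card_parts_add_card_filter_card_eq_two fun p => hP.card_le_two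
  have hpairs := hmax _ hP.isGraphMatching_filter_card_eq_two
  rw [card_univ] at hcount
  omega
end

section
/- (Greedy k-approximation) Let V be a finite set, k a positive integer, 𝓛 a family of nonempty subsets of V each of cardinality at most k, and w : 𝓛 → ℝ a nonnegative weight function. Suppose M is a matching of 𝓛 (its members pairwise disjoint) with the greedy domination property: every L ∈ 𝓛 intersects some F ∈ M with w(F) ≥ w(L). Then for every matching M' of 𝓛 one has ∑_{L∈M'} w(L) ≤ k · ∑_{F∈M} w(F); in particular the greedy matching is within a factor k of the maximum weighted matching. -/
/-!
Charge each `L ∈ M'` to a member `F ∈ M` that it meets and that outweighs it. The hyper-links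
charged to one `F` are pairwise disjoint and all meet `F`, so there are at most `#F ≤ k` of them;
hence `F` absorbs at most `k * w F`.
-/

open Finset

def IsHyperMatching {V : Type*} (𝓛 M : Finset (Finset V)) : Prop :=
  M ⊆ 𝓛 ∧ (M : Set (Finset V)).Pairwise Disjoint

theorem Finset.card_le_card_of_pairwise_disjoint_of_inter_nonempty {α : Type*} [DecidableEq α]
    {𝓐 : Finset (Finset α)} {F : Finset α} (h𝓐 : (𝓐 : Set (Finset α)).Pairwise Disjoint)
    (hF : ∀ A ∈ 𝓐, (A ∩ F).Nonempty) : #𝓐 ≤ #F :=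
  calc #𝓐 ≤ #(𝓐.biUnion (· ∩ F)) :=
        card_le_card_biUnion
          (Set.PairwiseDisjoint.mono_on (f := id) h𝓐 fun _ _ ↦ inter_subset_left) hF
    _ ≤ #F := card_le_card (biUnion_subset.2 fun _ _ ↦ inter_subset_right)

theorem Finset.sum_comp_le_mul_sum {ι κ R : Type*} [DecidableEq κ] [CommSemiring R]
    [PartialOrder R] [IsOrderedRing R] {s : Finset ι} {t : Finset κ} {f : ι → κ} {b : κ → R}
    {k : ℕ} (hf : ∀ i ∈ s, f i ∈ t) (hb : ∀ j ∈ t, 0 ≤ b j)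
    (hfiber : ∀ j ∈ t, #{i ∈ s | f i = j} ≤ k) :
    ∑ i ∈ s, b (f i) ≤ k * ∑ j ∈ t, b j := by
  rw [← sum_fiberwise_of_maps_to hf, mul_sum]
  refine sum_le_sum fun j hj ↦ ?_
  calc ∑ i ∈ s with f i = j, b (f i) = #{i ∈ s | f i = j} * b j := by
        rw [sum_congr rfl fun i hi ↦ by rw [(mem_filter.1 hi).2], sum_const, nsmul_eq_mul]
    _ ≤ k * b j := by gcongr; exacts [hb j hj, hfiber j hj]

theorem greedy_hypermatching_k_approximation_general
    {V : Type*} [DecidableEq V] (k : ℕ)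
    (𝓛 : Finset (Finset V))
    (h𝓛 : ∀ L ∈ 𝓛, L.Nonempty ∧ L.card ≤ k)
    (w : Finset V → ℝ) (hw : ∀ L ∈ 𝓛, 0 ≤ w L)
    (M : Finset (Finset V)) (hM : IsHyperMatching 𝓛 M)
    (hgreedy : ∀ L ∈ 𝓛, ∃ F ∈ M, (L ∩ F).Nonempty ∧ w L ≤ w F)
    (M' : Finset (Finset V)) (hM' : IsHyperMatching 𝓛 M') :
    ∑ L ∈ M', w L ≤ (k : ℝ) * ∑ F ∈ M, w F := by
  choose! f hfM hf_meets hf_outweighs using fun L hL ↦ hgreedy L (hM'.1 hL)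
  have hfiber : ∀ F ∈ M, #{L ∈ M' | f L = F} ≤ k := fun F hF ↦ by
    refine (card_le_card_of_pairwise_disjoint_of_inter_nonempty
      (hM'.2.mono (coe_subset.2 (filter_subset _ _))) fun L hL ↦ ?_).trans (h𝓛 F (hM.1 hF)).2
    obtain ⟨hL', rfl⟩ := mem_filter.1 hL
    exact hf_meets L hL'
  calc ∑ L ∈ M', w L ≤ ∑ L ∈ M', w (f L) := sum_le_sum hf_outweighs
    _ ≤ k * ∑ F ∈ M, w F := sum_comp_le_mul_sum hfM (fun F hF ↦ hw F (hM.1 hF)) hfiber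

/-- Greedy k-approximation: if `𝓛` is a family of nonempty subsets of `V` of cardinality
at most `k` with nonnegative weights, and `M` is a matching of `𝓛` with the greedy
domination property (every hyper-link of `𝓛` intersects some member of `M` of at least
its weight), then every matching `M'` of `𝓛` satisfies
`∑_{L ∈ M'} w L ≤ k * ∑_{F ∈ M} w F`. -/
theorem greedy_hypermatching_k_approximation
    {V : Type*} [Fintype V] [DecidableEq V] (k : ℕ) (hk : 1 ≤ k)
    (𝓛 : Finset (Finset V))
    (h𝓛 : ∀ L ∈ 𝓛, L.Nonempty ∧ L.card ≤ k)
    (w : Finset V → ℝ) (hw : ∀ L ∈ 𝓛, 0 ≤ w L)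
    (M : Finset (Finset V)) (hM : IsHyperMatching 𝓛 M)
    (hgreedy : ∀ L ∈ 𝓛, ∃ F ∈ M, (L ∩ F).Nonempty ∧ w L ≤ w F)
    (M' : Finset (Finset V)) (hM' : IsHyperMatching 𝓛 M') :
    ∑ L ∈ M', w L ≤ (k : ℝ) * ∑ F ∈ M, w F :=
  greedy_hypermatching_k_approximation_general k 𝓛 h𝓛 w hw M hM hgreedy M' hM'
end
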